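/- arXiv:1108.3472 — 4 statements merged into one kernel-verified Lean document; each statement's English description precedes it below -/
import Mathlib

section
/- If E : A → ℝ is not constant on the finite set A, then the mean energy function β ↦ ⟨E⟩(β) is strictly decreasing on ℝ. -/
theorem mean_energy_strictAnti (ι : Type) [Fintype ι] [Nonempty ι] (E : ι → ℝ)
    (hE : ∃ a b : ι, E a ≠ E b) :
    StrictAnti (fun β : ℝ =>
      (∑ ω : ι, E ω * Real.exp (-β * E ω)) / (∑ ω : ι, Real.exp (-β * E ω))) := by
  intro β γ hβγ
  have hZ : ∀ t : ℝ, 0 < ∑ ω : ι, Real.exp (-t * E ω) := fun t =>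
    Finset.sum_pos (fun ω _ => Real.exp_pos _) Finset.univ_nonempty
  simp only
  rw [div_lt_div_iff₀ (hZ γ) (hZ β)]
  have key : ∀ i j : ι, 0 ≤ (E i - E j) *
      (Real.exp (-β * E i) * Real.exp (-γ * E j) -
        Real.exp (-β * E j) * Real.exp (-γ * E i)) := by
    intro i j
    rcases lt_trichotomy (E i) (E j) with h | h | h
    · have h1 : E i - E j ≤ 0 := by linarith
      have h2 : Real.exp (-β * E i) * Real.exp (-γ * E j) -
          Real.exp (-β * E j) * Real.exp (-γ * E i) ≤ 0 := by
        rw [sub_nonpos, ← Real.exp_add, ← Real.exp_add]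
        exact Real.exp_le_exp.mpr (by nlinarith)
      nlinarith [mul_nonneg (neg_nonneg.mpr h1) (neg_nonneg.mpr h2)]
    · simp [h]
    · apply mul_nonneg
      · linarith
      · rw [sub_nonneg, ← Real.exp_add, ← Real.exp_add]
        exact Real.exp_le_exp.mpr (by nlinarith)
  obtain ⟨a, b, hab⟩ := hE
  have keypos : 0 < (E a - E b) *
      (Real.exp (-β * E a) * Real.exp (-γ * E b) -
        Real.exp (-β * E b) * Real.exp (-γ * E a)) := by
    rcases hab.lt_or_gt with h | h
    · apply mul_pos_of_neg_of_neg
      · linarith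
      · rw [sub_neg, ← Real.exp_add, ← Real.exp_add]
        exact Real.exp_lt_exp.mpr (by nlinarith)
    · apply mul_pos
      · linarith
      · rw [sub_pos, ← Real.exp_add, ← Real.exp_add]
        exact Real.exp_lt_exp.mpr (by nlinarith)
  have hsum : 0 < ∑ i : ι, ∑ j : ι, (E i - E j) *
      (Real.exp (-β * E i) * Real.exp (-γ * E j) -
        Real.exp (-β * E j) * Real.exp (-γ * E i)) := by
    have := Finset.sum_pos' (s := Finset.univ ×ˢ Finset.univ)
      (f := fun p : ι × ι => (E p.1 - E p.2) *
        (Real.exp (-β * E p.1) * Real.exp (-γ * E p.2) -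
          Real.exp (-β * E p.2) * Real.exp (-γ * E p.1)))
      (fun p _ => key p.1 p.2)
      ⟨(a, b), Finset.mem_product.mpr ⟨Finset.mem_univ _, Finset.mem_univ _⟩, keypos⟩
    rwa [Finset.sum_product] at this
  have inner : ∀ i : ι, (∑ j : ι, (E i - E j) *
      (Real.exp (-β * E i) * Real.exp (-γ * E j) -
        Real.exp (-β * E j) * Real.exp (-γ * E i)))
      = E i * Real.exp (-β * E i) * (∑ ω : ι, Real.exp (-γ * E ω))
        - E i * Real.exp (-γ * E i) * (∑ ω : ι, Real.exp (-β * E ω))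
        - Real.exp (-β * E i) * (∑ ω : ι, E ω * Real.exp (-γ * E ω))
        + Real.exp (-γ * E i) * (∑ ω : ι, E ω * Real.exp (-β * E ω)) := by
    intro i
    rw [Finset.mul_sum, Finset.mul_sum, Finset.mul_sum, Finset.mul_sum]
    rw [← Finset.sum_sub_distrib, ← Finset.sum_sub_distrib, ← Finset.sum_add_distrib]
    exact Finset.sum_congr rfl fun j _ => by ring
  rw [Finset.sum_congr rfl fun i _ => inner i] at hsum
  simp only [Finset.sum_add_distrib, Finset.sum_sub_distrib, ← Finset.sum_mul] at hsum
  linarith [hsum]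
end

section
/- (Maximum entropy characterization of the Gibbs distribution) Let q be a probability distribution on the finite set A satisfying the mean energy constraint Σ_ω q_ω E(ω) = ⟨E⟩(β) for some β ∈ ℝ, where ⟨E⟩(β) is the Gibbs mean energy. Then S(q) ≤ S(p(β)), where p(β) is the Gibbs distribution at inverse temperature β, with equality iff q = p(β). -/
open Real Finset

lemma gibbs_aux (ι : Type) [Fintype ι] (p q : ι → ℝ) (hp : ∀ ω, 0 < p ω)
    (hq : ∀ ω, 0 ≤ q ω) (hp1 : ∑ ω : ι, p ω = 1) (hq1 : ∑ ω : ι, q ω = 1) :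
    (-∑ ω : ι, q ω * Real.log (q ω)) ≤ (-∑ ω : ι, q ω * Real.log (p ω)) ∧
    ((-∑ ω : ι, q ω * Real.log (q ω)) = (-∑ ω : ι, q ω * Real.log (p ω)) ↔ q = p) := by
  have hterm : ∀ ω : ι, q ω * Real.log (p ω) - q ω * Real.log (q ω) ≤ p ω - q ω := by
    intro ω
    rcases eq_or_lt_of_le (hq ω) with h | h
    · simp [← h]; exact (hp ω).le
    · have := Real.log_le_sub_one_of_pos (div_pos (hp ω) h)
      have h2 : q ω * Real.log (p ω / q ω) ≤ q ω * (p ω / q ω - 1) :=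
        mul_le_mul_of_nonneg_left this h.le
      rw [Real.log_div (hp ω).ne' h.ne', mul_sub, mul_sub, mul_div_cancel₀ _ h.ne',
        mul_one] at h2
      linarith
  have hterm_lt : ∀ ω : ι, q ω ≠ p ω →
      q ω * Real.log (p ω) - q ω * Real.log (q ω) < p ω - q ω := by
    intro ω hne
    rcases eq_or_lt_of_le (hq ω) with h | h
    · simp [← h]; exact hp ω
    · have hd : p ω / q ω ≠ 1 := by
        intro hc; exact hne (by field_simp at hc; linarith)
      have := Real.log_lt_sub_one_of_pos (div_pos (hp ω) h) hd
      have h2 : q ω * Real.log (p ω / q ω) < q ω * (p ω / q ω - 1) :=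
        (mul_lt_mul_iff_right₀ h).mpr this
      rw [Real.log_div (hp ω).ne' h.ne', mul_sub, mul_sub, mul_div_cancel₀ _ h.ne',
        mul_one] at h2
      linarith
  have hsum : ∑ ω : ι, (q ω * Real.log (p ω) - q ω * Real.log (q ω)) ≤ 0 := by
    calc ∑ ω : ι, (q ω * Real.log (p ω) - q ω * Real.log (q ω))
        ≤ ∑ ω : ι, (p ω - q ω) := Finset.sum_le_sum fun ω _ => hterm ω
      _ = 0 := by rw [Finset.sum_sub_distrib, hp1, hq1]; ring
  rw [Finset.sum_sub_distrib] at hsum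
  constructor
  · linarith
  constructor
  · intro heq
    by_contra hne
    obtain ⟨ω₀, hω₀⟩ := Function.ne_iff.mp hne
    have : ∑ ω : ι, (q ω * Real.log (p ω) - q ω * Real.log (q ω)) <
        ∑ ω : ι, (p ω - q ω) :=
      Finset.sum_lt_sum (fun ω _ => hterm ω) ⟨ω₀, Finset.mem_univ _, hterm_lt ω₀ hω₀⟩
    rw [Finset.sum_sub_distrib, Finset.sum_sub_distrib, hp1, hq1] at this
    linarith
  · rintro rfl; rfl

theorem gibbs_max_entropy (ι : Type) [Fintype ι] [Nonempty ι] (E : ι → ℝ) (β : ℝ)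
    (q : ι → ℝ) (hq : ∀ ω, 0 ≤ q ω) (hq1 : ∑ ω : ι, q ω = 1)
    (hmean : ∑ ω : ι, q ω * E ω =
      ∑ ω : ι, (Real.exp (-β * E ω) / (∑ ω' : ι, Real.exp (-β * E ω'))) * E ω) :
    (-∑ ω : ι, q ω * Real.log (q ω)) ≤
      (-∑ ω : ι, (Real.exp (-β * E ω) / (∑ ω' : ι, Real.exp (-β * E ω'))) *
        Real.log (Real.exp (-β * E ω) / (∑ ω' : ι, Real.exp (-β * E ω')))) ∧
    ((-∑ ω : ι, q ω * Real.log (q ω)) =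
      (-∑ ω : ι, (Real.exp (-β * E ω) / (∑ ω' : ι, Real.exp (-β * E ω'))) *
        Real.log (Real.exp (-β * E ω) / (∑ ω' : ι, Real.exp (-β * E ω'))))
      ↔ q = fun ω => Real.exp (-β * E ω) / (∑ ω' : ι, Real.exp (-β * E ω'))) := by
  set Z : ℝ := ∑ ω' : ι, Real.exp (-β * E ω') with hZdef
  have hZ : 0 < Z := Finset.sum_pos (fun ω _ => Real.exp_pos _) Finset.univ_nonempty
  set p : ι → ℝ := fun ω => Real.exp (-β * E ω) / Z with hpdef
  have hp : ∀ ω, 0 < p ω := fun ω => div_pos (Real.exp_pos _) hZ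
  have hp1 : ∑ ω : ι, p ω = 1 := by
    rw [hpdef, ← Finset.sum_div, ← hZdef, div_self hZ.ne']
  -- log p ω = -β * E ω - log Z
  have hlogp : ∀ ω, Real.log (p ω) = -β * E ω - Real.log Z := by
    intro ω
    rw [hpdef, Real.log_div (Real.exp_ne_zero _) hZ.ne', Real.log_exp]
  have key : ∀ r : ι → ℝ, (∑ ω : ι, r ω = 1) →
      (-∑ ω : ι, r ω * Real.log (p ω)) = β * (∑ ω : ι, r ω * E ω) + Real.log Z := by
    intro r hr
    have : ∀ ω, r ω * Real.log (p ω) = -(β * (r ω * E ω)) - r ω * Real.log Z := by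
      intro ω; rw [hlogp]; ring
    simp_rw [this]
    rw [Finset.sum_sub_distrib, Finset.sum_neg_distrib, ← Finset.mul_sum,
      ← Finset.sum_mul, hr]
    ring
  have hqp : (-∑ ω : ι, q ω * Real.log (p ω)) = (-∑ ω : ι, p ω * Real.log (p ω)) := by
    rw [key q hq1, key p hp1, hmean]
  obtain ⟨h1, h2⟩ := gibbs_aux ι p q hp hq hp1 hq1
  exact ⟨hqp ▸ h1, hqp ▸ h2⟩
end

section
/- (Injectivity of the mean energy / moment map) If the finite set A ⊂ ℝⁿ affinely spans ℝⁿ, then the map β ↦ ⟨E⟩(β) = Σ_{ω∈A} p_ω(β)·ω from (ℝⁿ)* to ℝⁿ is injective. -/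
/-!
If `β₁ ≠ β₂`, the functional `γ = β₁ - β₂` is not constant on `A`, since `A` affinely spans.
The Gibbs weights at `β₁` are those at `β₂` tilted by the strictly decreasing factor `e^{-γ}`,
and such a tilt strictly lowers the mean of `γ` (a strict weighted Chebyshev inequality).
Hence `γ ⟨E⟩(β₁) < γ ⟨E⟩(β₂)`.
-/

open Finset

theorem LinearMap.exists_apply_ne_of_affineSpan_eq_top {k V W : Type*} [Ring k]
    [AddCommGroup V] [Module k V] [AddCommGroup W] [Module k W] {s : Set V}
    (hs : affineSpan k s = ⊤) {f : V →ₗ[k] W} (hf : f ≠ 0) :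
    ∃ x ∈ s, ∃ y ∈ s, f x ≠ f y := by
  contrapose! hf
  have hker : vectorSpan k s ≤ LinearMap.ker f :=
    Submodule.span_le.2 <| by
      rintro _ ⟨x, hx, y, hy, rfl⟩
      simp [hf x hx y hy]
  rw [← direction_affineSpan, hs, AffineSubspace.direction_top, top_le_iff,
    LinearMap.ker_eq_top] at hker
  exact hker

theorem Finset.sum_sum_mul_sub_mul_sub {ι R : Type*} [CommRing R] (s : Finset ι) (a f g : ι → R) :
    ∑ i ∈ s, ∑ j ∈ s, a i * a j * ((f i - f j) * (g i - g j)) =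
      2 * ((∑ i ∈ s, a i * f i * g i) * ∑ i ∈ s, a i
        - (∑ i ∈ s, a i * f i) * ∑ i ∈ s, a i * g i) := by
  have expand : ∀ i j, a i * a j * ((f i - f j) * (g i - g j)) =
      a i * f i * g i * a j + a i * (a j * f j * g j)
        - (a i * f i * (a j * g j) + a i * g i * (a j * f j)) := fun i j => by ring
  simp only [expand, sum_sub_distrib, sum_add_distrib, ← mul_sum, ← sum_mul]
  ring

theorem StrictAnti.sum_mul_comp_mul_mul_sum_lt {ι R : Type*} [CommRing R] [LinearOrder R]
    [IsStrictOrderedRing R] {φ : R → R} (hφ : StrictAnti φ) {s : Finset ι} {a x : ι → R} (ha : ∀ i ∈ s, 0 < a i)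
    (hx : ∃ i ∈ s, ∃ j ∈ s, x i ≠ x j) :
    (∑ i ∈ s, a i * φ (x i) * x i) * ∑ i ∈ s, a i
      < (∑ i ∈ s, a i * x i) * ∑ i ∈ s, a i * φ (x i) := by
  have term_neg : ∀ {u v : R}, u ≠ v → (φ u - φ v) * (u - v) < 0 := fun {u v} huv => by
    rcases huv.lt_or_gt with h | h
    · exact mul_neg_of_pos_of_neg (sub_pos.2 (hφ h)) (sub_neg.2 h)
    · exact mul_neg_of_neg_of_pos (sub_neg.2 (hφ h)) (sub_pos.2 h)
  obtain ⟨i, hi, j, hj, hij⟩ := hx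
  have double_sum_neg :
      ∑ i ∈ s, ∑ j ∈ s, a i * a j * ((φ (x i) - φ (x j)) * (x i - x j)) < 0 := by
    rw [← sum_product' (f := fun i j => a i * a j * ((φ (x i) - φ (x j)) * (x i - x j)))]
    refine sum_neg' (fun p hp => ?_) ⟨(i, j), mem_product.2 ⟨hi, hj⟩, ?_⟩
    · rw [mem_product] at hp
      refine mul_nonpos_of_nonneg_of_nonpos (mul_pos (ha _ hp.1) (ha _ hp.2)).le ?_
      rcases eq_or_ne (x p.1) (x p.2) with h | h
      · simp [h]
      · exact (term_neg h).le
    · exact mul_neg_of_pos_of_neg (mul_pos (ha i hi) (ha j hj)) (term_neg hij)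
  rw [sum_sum_mul_sub_mul_sub] at double_sum_neg
  linarith

theorem map_sum_div_smul {ι k V F : Type*} [Field k] [AddCommGroup V] [Module k V]
    [FunLike F V k] [LinearMapClass F k V k] (f : F) (s : Finset ι) (w : ι → k) (Z : k)
    (v : ι → V) : f (∑ i ∈ s, (w i / Z) • v i) = (∑ i ∈ s, w i * f (v i)) / Z := by
  simp only [map_sum, map_smul, smul_eq_mul, sum_div, div_mul_eq_mul_div]

theorem moment_map_injective (n : ℕ) (A : Finset (Fin n → ℝ))
    (hA : affineSpan ℝ (A : Set (Fin n → ℝ)) = ⊤) :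
    Function.Injective (fun β : (Fin n → ℝ) →L[ℝ] ℝ =>
      ∑ ω ∈ A, (Real.exp (-(β ω)) / (∑ ω' ∈ A, Real.exp (-(β ω')))) • ω) := by
  intro β₁ β₂ h
  by_contra hne
  set γ := β₁ - β₂
  have hγ : (γ : (Fin n → ℝ) →ₗ[ℝ] ℝ) ≠ 0 := by
    rw [← ContinuousLinearMap.toLinearMap_zero]
    exact ContinuousLinearMap.coe_injective.ne (sub_ne_zero.2 hne)
  obtain ⟨ω₁, h₁, ω₂, h₂, hω⟩ := LinearMap.exists_apply_ne_of_affineSpan_eq_top hA hγ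
  have tilt : ∀ ω, Real.exp (-(β₁ ω)) = Real.exp (-(β₂ ω)) * Real.exp (-(γ ω)) := fun ω => by
    rw [← Real.exp_add, sub_apply]; ring_nf
  have hpos : ∀ β : (Fin n → ℝ) →L[ℝ] ℝ, 0 < ∑ ω ∈ A, Real.exp (-(β ω)) :=
    fun β => sum_pos (fun ω _ => Real.exp_pos _) ⟨ω₁, h₁⟩
  have exp_neg_strictAnti : StrictAnti fun t : ℝ => Real.exp (-t) :=
    fun _ _ hst => Real.exp_lt_exp.2 (neg_lt_neg hst)
  have tilted_mean_lt := exp_neg_strictAnti.sum_mul_comp_mul_mul_sum_lt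
    (a := fun ω => Real.exp (-(β₂ ω))) (x := fun ω => γ ω) (fun ω _ => Real.exp_pos _)
    ⟨ω₁, h₁, ω₂, h₂, hω⟩
  have mean_γ_eq := congrArg γ h
  simp only [map_sum_div_smul] at mean_γ_eq
  rw [div_eq_div_iff (hpos β₁).ne' (hpos β₂).ne'] at mean_γ_eq
  simp only [tilt] at mean_γ_eq
  linarith
end

section
/- (One-dimensional Legendre relation) For a finite nonempty A ⊂ ℝ with E the inclusion, the functions F(β) = −log Z(β) and the constrained-maximum entropy S(Ē) = max{S(q) : q ∈ Δ^A, Σ_ω q_ω ω = Ē} satisfy S(Ē) = inf_{β∈ℝ} (β·Ē + log Z(β)) for every Ē in the open interval (min A, max A). -/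
private lemma Zpos (A : Finset ℝ) (hA : A.Nonempty) (β : ℝ) :
    0 < ∑ ω ∈ A, Real.exp (-β * ω) :=
  Finset.sum_pos (fun _ _ => Real.exp_pos _) hA

private lemma gibbs_bound (A : Finset ℝ) (hA : A.Nonempty) (q : ℝ → ℝ)
    (hq0 : ∀ ω ∈ A, 0 ≤ q ω) (hq1 : ∑ ω ∈ A, q ω = 1)
    (Ebar : ℝ) (hmean : ∑ ω ∈ A, q ω * ω = Ebar) (β : ℝ) :
    -∑ ω ∈ A, q ω * Real.log (q ω) ≤ β * Ebar + Real.log (∑ ω ∈ A, Real.exp (-β * ω)) := by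
  set Z := ∑ ω ∈ A, Real.exp (-β * ω) with hZdef
  have hZpos := Zpos A hA β
  set p : ℝ → ℝ := fun ω => Real.exp (-β * ω) / Z with hp
  have hplog : ∀ ω : ℝ, Real.log (p ω) = -β * ω - Real.log Z := by
    intro ω
    show Real.log (Real.exp (-β * ω) / Z) = _
    rw [Real.log_div (Real.exp_ne_zero _) hZpos.ne', Real.log_exp]
  have hpsum : ∑ ω ∈ A, p ω = 1 := by
    simp only [hp, ← Finset.sum_div]
    exact div_self hZpos.ne'
  have key : ∀ ω ∈ A, q ω * (Real.log (p ω) - Real.log (q ω)) ≤ p ω - q ω := by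
    intro ω hω
    rcases (hq0 ω hω).eq_or_lt with h | h
    · rw [← h]
      simp only [zero_mul, sub_zero]
      positivity
    · have hppos : 0 < p ω := div_pos (Real.exp_pos _) hZpos
      have hdiv : Real.log (p ω) - Real.log (q ω) = Real.log (p ω / q ω) :=
        (Real.log_div hppos.ne' h.ne').symm
      rw [hdiv]
      have hle := Real.log_le_sub_one_of_pos (div_pos hppos h)
      calc q ω * Real.log (p ω / q ω) ≤ q ω * (p ω / q ω - 1) :=
            mul_le_mul_of_nonneg_left hle h.le
        _ = p ω - q ω := by field_simp
  have hsum : ∑ ω ∈ A, q ω * (Real.log (p ω) - Real.log (q ω)) ≤ 0 := by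
    calc ∑ ω ∈ A, q ω * (Real.log (p ω) - Real.log (q ω))
        ≤ ∑ ω ∈ A, (p ω - q ω) := Finset.sum_le_sum key
      _ = 0 := by rw [Finset.sum_sub_distrib, hpsum, hq1]; ring
  have hlogp : ∑ ω ∈ A, q ω * Real.log (p ω) = -β * Ebar - Real.log Z := by
    calc ∑ ω ∈ A, q ω * Real.log (p ω)
        = ∑ ω ∈ A, (-β * (q ω * ω) - Real.log Z * q ω) := by
          refine Finset.sum_congr rfl fun ω hω => ?_
          rw [hplog]; ring
      _ = -β * Ebar - Real.log Z := by
          rw [Finset.sum_sub_distrib, ← Finset.mul_sum, ← Finset.mul_sum, hmean, hq1, mul_one]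
  have expand : ∑ ω ∈ A, q ω * (Real.log (p ω) - Real.log (q ω))
      = (-β * Ebar - Real.log Z) - ∑ ω ∈ A, q ω * Real.log (q ω) := by
    rw [← hlogp, ← Finset.sum_sub_distrib]
    refine Finset.sum_congr rfl fun ω hω => ?_
    ring
  rw [expand] at hsum
  linarith

private lemma te_le (γ t : ℝ) (hγ : 0 < γ) (ht : 0 ≤ t) :
    t * Real.exp (-(γ * t)) ≤ 1 / γ := by
  have hx : γ * t ≤ Real.exp (γ * t) := by
    linarith [Real.add_one_le_exp (γ * t)]
  rw [Real.exp_neg, ← div_eq_mul_inv, div_le_div_iff₀ (Real.exp_pos _) hγ]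
  nlinarith [Real.exp_pos (γ * t)]

private lemma mean_upper (A : Finset ℝ) (hA : A.Nonempty) (β : ℝ) (hβ : 0 < β) :
    (∑ ω ∈ A, ω * Real.exp (-β * ω)) / (∑ ω ∈ A, Real.exp (-β * ω))
      ≤ A.min' hA + A.card / β := by
  set a := A.min' hA with ha
  have hZpos := Zpos A hA β
  rw [div_le_iff₀ hZpos]
  have hterm : ∀ ω ∈ A, ω * Real.exp (-β * ω)
      ≤ a * Real.exp (-β * ω) + (1 / β) * Real.exp (-β * a) := by
    intro ω hω
    have haω : a ≤ ω := A.min'_le ω hω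
    have key : (ω - a) * Real.exp (-β * ω) ≤ (1 / β) * Real.exp (-β * a) := by
      have h1 : Real.exp (-β * ω) = Real.exp (-(β * (ω - a))) * Real.exp (-β * a) := by
        rw [← Real.exp_add]; ring_nf
      rw [h1, ← mul_assoc]
      have h2 := te_le β (ω - a) hβ (by linarith)
      have h3 : (0:ℝ) ≤ Real.exp (-β * a) := (Real.exp_pos _).le
      nlinarith
    nlinarith [key]
  calc ∑ ω ∈ A, ω * Real.exp (-β * ω)
      ≤ ∑ ω ∈ A, (a * Real.exp (-β * ω) + (1 / β) * Real.exp (-β * a)) :=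
        Finset.sum_le_sum hterm
    _ = a * (∑ ω ∈ A, Real.exp (-β * ω)) + A.card * ((1 / β) * Real.exp (-β * a)) := by
        rw [Finset.sum_add_distrib, ← Finset.mul_sum, Finset.sum_const, nsmul_eq_mul]
    _ ≤ a * (∑ ω ∈ A, Real.exp (-β * ω)) + A.card * ((1 / β) * (∑ ω ∈ A, Real.exp (-β * ω))) := by
        have hle : Real.exp (-β * a) ≤ ∑ ω ∈ A, Real.exp (-β * ω) :=
          Finset.single_le_sum (fun ω _ => (Real.exp_pos (-β * ω)).le) (A.min'_mem hA)
        have hc : (0:ℝ) ≤ A.card := Nat.cast_nonneg _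
        have hb : (0:ℝ) ≤ 1 / β := by positivity
        have h5 := mul_le_mul_of_nonneg_left (mul_le_mul_of_nonneg_left hle hb) hc
        linarith
    _ = (a + A.card / β) * (∑ ω ∈ A, Real.exp (-β * ω)) := by ring

private lemma mean_lower (A : Finset ℝ) (hA : A.Nonempty) (β : ℝ) (hβ : β < 0) :
    A.max' hA + A.card / β
      ≤ (∑ ω ∈ A, ω * Real.exp (-β * ω)) / (∑ ω ∈ A, Real.exp (-β * ω)) := by
  set b := A.max' hA with hb
  have hZpos := Zpos A hA β
  rw [le_div_iff₀ hZpos]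
  have hγ : 0 < -β := by linarith
  have hterm : ∀ ω ∈ A, b * Real.exp (-β * ω) + (1 / β) * Real.exp (-β * b)
      ≤ ω * Real.exp (-β * ω) := by
    intro ω hω
    have hωb : ω ≤ b := A.le_max' ω hω
    have key : (b - ω) * Real.exp (-β * ω) ≤ (1 / (-β)) * Real.exp (-β * b) := by
      have h1 : Real.exp (-β * ω) = Real.exp (-((-β) * (b - ω))) * Real.exp (-β * b) := by
        rw [← Real.exp_add]; ring_nf
      rw [h1, ← mul_assoc]
      have h2 := te_le (-β) (b - ω) hγ (by linarith)
      have h3 : (0:ℝ) ≤ Real.exp (-β * b) := (Real.exp_pos _).le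
      nlinarith
    have h4 : (1 / β) * Real.exp (-β * b) = -((1 / (-β)) * Real.exp (-β * b)) := by
      field_simp
    nlinarith [key]
  calc (b + A.card / β) * (∑ ω ∈ A, Real.exp (-β * ω))
      = b * (∑ ω ∈ A, Real.exp (-β * ω)) + A.card * ((1 / β) * (∑ ω ∈ A, Real.exp (-β * ω))) := by
        ring
    _ ≤ b * (∑ ω ∈ A, Real.exp (-β * ω)) + A.card * ((1 / β) * Real.exp (-β * b)) := by
        have hle : Real.exp (-β * b) ≤ ∑ ω ∈ A, Real.exp (-β * ω) :=
          Finset.single_le_sum (fun ω _ => (Real.exp_pos (-β * ω)).le) (A.max'_mem hA)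
        have hc : (0:ℝ) ≤ A.card := Nat.cast_nonneg _
        have hneg : 1 / β ≤ 0 := by
          apply div_nonpos_of_nonneg_of_nonpos <;> linarith
        have h5 := mul_le_mul_of_nonneg_left (mul_le_mul_of_nonpos_left hle hneg) hc
        linarith
    _ = ∑ ω ∈ A, (b * Real.exp (-β * ω) + (1 / β) * Real.exp (-β * b)) := by
        rw [Finset.sum_add_distrib, ← Finset.mul_sum, Finset.sum_const, nsmul_eq_mul]
    _ ≤ ∑ ω ∈ A, ω * Real.exp (-β * ω) := Finset.sum_le_sum hterm

private lemma exists_beta (A : Finset ℝ) (hA : A.Nonempty) (hcard : 0 < (A.card : ℝ))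
    (Ebar : ℝ) (h1 : A.min' hA < Ebar) (h2 : Ebar < A.max' hA) :
    ∃ β : ℝ, (∑ ω ∈ A, ω * Real.exp (-β * ω)) / (∑ ω ∈ A, Real.exp (-β * ω)) = Ebar := by
  set a := A.min' hA
  set b := A.max' hA
  set n : ℝ := (A.card : ℝ)
  set m : ℝ → ℝ := fun β =>
    (∑ ω ∈ A, ω * Real.exp (-β * ω)) / (∑ ω ∈ A, Real.exp (-β * ω)) with hm
  have hcont : Continuous m := by
    apply Continuous.div
    · exact continuous_finset_sum _ fun ω _ => by fun_prop
    · exact continuous_finset_sum _ fun ω _ => by fun_prop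
    · exact fun β => (Zpos A hA β).ne'
  set β₂ : ℝ := n / (Ebar - a) + 1 with hβ₂def
  set β₁ : ℝ := -(n / (b - Ebar) + 1) with hβ₁def
  have hd1 : 0 < Ebar - a := by linarith
  have hd2 : 0 < b - Ebar := by linarith
  have hβ₂pos : 0 < β₂ := by positivity
  have hβ₁neg : β₁ < 0 := by
    have : 0 < n / (b - Ebar) + 1 := by positivity
    simp only [hβ₁def]; linarith
  have hupper : m β₂ < Ebar := by
    have hmu := mean_upper A hA β₂ hβ₂pos
    have hval : (Ebar - a) * (n / (Ebar - a)) = n := by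
      field_simp
    have hfrac : n / β₂ < Ebar - a := by
      rw [div_lt_iff₀ hβ₂pos]
      simp only [hβ₂def]
      nlinarith [hval, hd1]
    calc m β₂ ≤ a + n / β₂ := hmu
      _ < Ebar := by linarith
  have hlower : Ebar < m β₁ := by
    have hc1 : 0 < n / (b - Ebar) + 1 := by positivity
    have hval : (b - Ebar) * (n / (b - Ebar)) = n := by
      field_simp
    have hfrac : n / (n / (b - Ebar) + 1) < b - Ebar := by
      rw [div_lt_iff₀ hc1]
      nlinarith [hval, hd2]
    have hβ₁eq : n / β₁ = -(n / (n / (b - Ebar) + 1)) := by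
      rw [hβ₁def, div_neg]
    have hgt : Ebar < b + n / β₁ := by rw [hβ₁eq]; linarith
    calc Ebar < b + n / β₁ := hgt
      _ ≤ m β₁ := mean_lower A hA β₁ hβ₁neg
  have hsub : Set.Icc (m β₂) (m β₁) ⊆ m '' Set.Icc β₁ β₂ :=
    intermediate_value_Icc' (by linarith) hcont.continuousOn
  obtain ⟨β, _, hβ⟩ := hsub ⟨hupper.le, hlower.le⟩
  exact ⟨β, hβ⟩

private lemma gibbs_entropy (A : Finset ℝ) (hA : A.Nonempty) (β : ℝ) :
    -∑ ω ∈ A, (Real.exp (-β * ω) / (∑ ω' ∈ A, Real.exp (-β * ω'))) *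
        Real.log (Real.exp (-β * ω) / (∑ ω' ∈ A, Real.exp (-β * ω')))
      = β * ((∑ ω ∈ A, ω * Real.exp (-β * ω)) / (∑ ω ∈ A, Real.exp (-β * ω)))
        + Real.log (∑ ω ∈ A, Real.exp (-β * ω)) := by
  set Z := ∑ ω ∈ A, Real.exp (-β * ω) with hZdef
  have hZpos := Zpos A hA β
  have hplog : ∀ ω : ℝ, Real.log (Real.exp (-β * ω) / Z) = -β * ω - Real.log Z := by
    intro ω
    rw [Real.log_div (Real.exp_ne_zero _) hZpos.ne', Real.log_exp]
  have hpsum : ∑ ω ∈ A, Real.exp (-β * ω) / Z = 1 := by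
    rw [← Finset.sum_div]
    exact div_self hZpos.ne'
  have : ∑ ω ∈ A, (Real.exp (-β * ω) / Z) * Real.log (Real.exp (-β * ω) / Z)
      = -β * ((∑ ω ∈ A, ω * Real.exp (-β * ω)) / Z) - Real.log Z := by
    calc ∑ ω ∈ A, (Real.exp (-β * ω) / Z) * Real.log (Real.exp (-β * ω) / Z)
        = ∑ ω ∈ A, (-β * (ω * Real.exp (-β * ω) / Z)
            - Real.log Z * (Real.exp (-β * ω) / Z)) := by
          refine Finset.sum_congr rfl fun ω hω => ?_
          rw [hplog]; ring
      _ = -β * ((∑ ω ∈ A, ω * Real.exp (-β * ω)) / Z) - Real.log Z := by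
          rw [Finset.sum_sub_distrib, ← Finset.mul_sum, ← Finset.mul_sum, ← Finset.sum_div,
            hpsum, mul_one]
  rw [this]
  ring

theorem legendre_relation_entropy (A : Finset ℝ) (hA : 1 < A.card)
    (Ebar : ℝ) (h1 : A.min' (Finset.card_pos.mp (by omega)) < Ebar)
    (h2 : Ebar < A.max' (Finset.card_pos.mp (by omega))) :
    sSup {s : ℝ | ∃ q : ℝ → ℝ, (∀ ω ∈ A, 0 ≤ q ω) ∧ (∑ ω ∈ A, q ω) = 1 ∧
        (∑ ω ∈ A, q ω * ω) = Ebar ∧ s = -∑ ω ∈ A, q ω * Real.log (q ω)}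
      = ⨅ β : ℝ, (β * Ebar + Real.log (∑ ω ∈ A, Real.exp (-β * ω))) := by
  have hA' : A.Nonempty := Finset.card_pos.mp (by omega)
  have hcard : 0 < (A.card : ℝ) := by
    have : 0 < A.card := by omega
    exact_mod_cast this
  obtain ⟨βs, hβs⟩ := exists_beta A hA' hcard Ebar h1 h2
  set Zs := ∑ ω ∈ A, Real.exp (-βs * ω) with hZsdef
  have hZspos := Zpos A hA' βs
  set p : ℝ → ℝ := fun ω => Real.exp (-βs * ω) / Zs with hpdef
  have hp0 : ∀ ω ∈ A, 0 ≤ p ω := fun ω _ => by positivity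
  have hp1 : ∑ ω ∈ A, p ω = 1 := by
    simp only [hpdef, ← Finset.sum_div]
    exact div_self hZspos.ne'
  have hpmean : ∑ ω ∈ A, p ω * ω = Ebar := by
    have heq : ∑ ω ∈ A, p ω * ω = (∑ ω ∈ A, ω * Real.exp (-βs * ω)) / Zs := by
      rw [Finset.sum_div]
      refine Finset.sum_congr rfl fun ω hω => ?_
      simp only [hpdef]
      ring
    rw [heq, hZsdef]
    exact hβs
  have hent : -∑ ω ∈ A, p ω * Real.log (p ω)
      = βs * Ebar + Real.log Zs := by
    have hge := gibbs_entropy A hA' βs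
    simp only [hpdef, hZsdef]
    rw [hge, hβs]
  set S : Set ℝ := {s : ℝ | ∃ q : ℝ → ℝ, (∀ ω ∈ A, 0 ≤ q ω) ∧ (∑ ω ∈ A, q ω) = 1 ∧
      (∑ ω ∈ A, q ω * ω) = Ebar ∧ s = -∑ ω ∈ A, q ω * Real.log (q ω)} with hSdef
  have hmem : (βs * Ebar + Real.log Zs) ∈ S :=
    ⟨p, hp0, hp1, hpmean, hent.symm⟩
  have hne : S.Nonempty := ⟨_, hmem⟩
  have hub : ∀ β : ℝ, ∀ s ∈ S, s ≤ β * Ebar + Real.log (∑ ω ∈ A, Real.exp (-β * ω)) := by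
    rintro β s ⟨q, hq0, hq1, hqm, rfl⟩
    exact gibbs_bound A hA' q hq0 hq1 Ebar hqm β
  have hbddAbove : BddAbove S :=
    ⟨0 * Ebar + Real.log (∑ ω ∈ A, Real.exp (-(0:ℝ) * ω)), fun s hs => hub 0 s hs⟩
  have hbddBelow : BddBelow (Set.range fun β : ℝ =>
      β * Ebar + Real.log (∑ ω ∈ A, Real.exp (-β * ω))) := by
    refine ⟨βs * Ebar + Real.log Zs, ?_⟩
    rintro y ⟨β, rfl⟩
    rw [← hent]
    exact gibbs_bound A hA' p hp0 hp1 Ebar hpmean β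
  apply le_antisymm
  · apply le_ciInf
    intro β
    exact csSup_le hne (hub β)
  · calc (⨅ β : ℝ, (β * Ebar + Real.log (∑ ω ∈ A, Real.exp (-β * ω))))
        ≤ βs * Ebar + Real.log Zs := ciInf_le hbddBelow βs
      _ ≤ sSup S := le_csSup hbddAbove hmem
end
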